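/- In the disjunction widget of the BSP_r construction (t term components P_1,...,P_t, each with send vertex s_j and receive vertex r_j forming a t-ring, followed by three receive vertices r_{j,a_j}, r_{j,b_j}, r_{j,c_j}, with one token per term component), a colouring sequence can colour some r_j green if and only if at least one r_k is coloured yellow (via the token rule) before any of r_{k,a_k}, r_{k,b_k}, r_{k,c_k} in that component is coloured yellow. -/

import Mathlib

/-! Formal framework: communication graphs and the red/yellow/green colouring game
(Brodsky–Pedersen–Wagner, "On the Complexity of Buffer Allocation in Message Passing Systems"),
with receive-side token pools. -/

inductive Colour : Type
  | red | yellow | green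
deriving DecidableEq

/-- A communication graph: vertices are partitioned into start/send/receive/end vertices,
`pred u v` means `u` is the component predecessor of `v` (a process arc `u → v`),
`matched u v` is a communication arc from send `u` to its matching receive `v`,
`comp v` is the index of the process component of `v`, and `pos v` is the position
of `v` within its component chain. -/
structure CommGraph (V : Type) where
  isStart : V → Prop
  isSend : V → Prop
  isRecv : V → Prop
  isEnd : V → Prop
  pred : V → V → Prop
  matched : V → V → Prop
  comp : V → ℕ
  pos : V → ℕ

namespace CommGraph

variable {V : Type}

/-- An arc of the communication graph (process arc or communication arc). -/
def GArc (G : CommGraph V) (u v : V) : Prop := G.pred u v ∨ G.matched u v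

/-- Well-formedness of a communication graph: the vertex kinds partition `V`,
components are chains (unique predecessors, positions increase along process arcs),
communication arcs go from sends to receives in different components and form a
partial matching, and the graph is acyclic (arcs admit no infinite descent). -/
structure WF (G : CommGraph V) : Prop where
  kinds : ∀ v, G.isStart v ∨ G.isSend v ∨ G.isRecv v ∨ G.isEnd v
  start_not_send : ∀ v, G.isStart v → ¬ G.isSend v
  start_not_recv : ∀ v, G.isStart v → ¬ G.isRecv v
  start_not_end : ∀ v, G.isStart v → ¬ G.isEnd v
  send_not_recv : ∀ v, G.isSend v → ¬ G.isRecv v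
  send_not_end : ∀ v, G.isSend v → ¬ G.isEnd v
  recv_not_end : ∀ v, G.isRecv v → ¬ G.isEnd v
  pred_unique : ∀ {u u' v}, G.pred u v → G.pred u' v → u = u'
  pred_comp : ∀ {u v}, G.pred u v → G.comp u = G.comp v
  pred_pos : ∀ {u v}, G.pred u v → G.pos v = G.pos u + 1
  start_no_pred : ∀ {u v}, G.pred u v → ¬ G.isStart v
  has_pred : ∀ v, ¬ G.isStart v → ∃ u, G.pred u v
  matched_send : ∀ {u v}, G.matched u v → G.isSend u
  matched_recv : ∀ {u v}, G.matched u v → G.isRecv v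
  matched_comp : ∀ {u v}, G.matched u v → G.comp u ≠ G.comp v
  matched_unique_left : ∀ {u u' v}, G.matched u v → G.matched u' v → u = u'
  matched_unique_right : ∀ {u v v'}, G.matched u v → G.matched u v' → v = v'
  send_has_match : ∀ v, G.isSend v → ∃ w, G.matched v w
  recv_has_match : ∀ v, G.isRecv v → ∃ w, G.matched w v
  dag : WellFounded fun u v => G.GArc u v

end CommGraph

/-- A state of the colouring game: the colouring, which receive vertices currently
hold a token on their incident communication arc, and the number of available
tokens in each (per-process, receive-side) pool. -/
structure St (V : Type) where
  col : V → Colour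
  tok : V → Bool
  pool : ℕ → ℕ

/-- The names of the colouring rules. -/
inductive Rule : Type
  | sendYel | recvYel | recvYelTok | sendGrn | recvGrn | endYel | endGrn
deriving DecidableEq

variable {V : Type}

/-- One move of the colouring game (receive-side buffering: the token used by the
buffered-receive rule `recvYelTok` comes from the pool of the receiving component,
and is returned when the receive turns green). -/
inductive Step [DecidableEq V] (G : CommGraph V) : Rule → St V → St V → Prop
  | sendYel {s : St V} {v u : V} :
      G.isSend v → s.col v = .red → G.pred u v → s.col u = .green →
      Step G .sendYel s ⟨Function.update s.col v .yellow, s.tok, s.pool⟩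
  | recvYel {s : St V} {v u w : V} :
      G.isRecv v → s.col v = .red → G.matched w v → s.col w = .yellow →
      G.pred u v → s.col u = .green →
      Step G .recvYel s ⟨Function.update s.col v .yellow, s.tok, s.pool⟩
  | recvYelTok {s : St V} {v w : V} :
      G.isRecv v → s.col v = .red → G.matched w v → s.col w = .yellow →
      0 < s.pool (G.comp v) →
      Step G .recvYelTok s ⟨Function.update s.col v .yellow,
        Function.update s.tok v true,
        Function.update s.pool (G.comp v) (s.pool (G.comp v) - 1)⟩
  | sendGrn {s : St V} {v r : V} :
      G.isSend v → s.col v = .yellow → G.matched v r → s.col r = .yellow →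
      Step G .sendGrn s ⟨Function.update s.col v .green, s.tok, s.pool⟩
  | recvGrn {s : St V} {v u w : V} :
      G.isRecv v → s.col v = .yellow → G.pred u v → s.col u = .green →
      G.matched w v → s.col w = .green →
      Step G .recvGrn s ⟨Function.update s.col v .green,
        Function.update s.tok v false,
        if s.tok v then
          Function.update s.pool (G.comp v) (s.pool (G.comp v) + 1)
        else s.pool⟩
  | endYel {s : St V} {v u : V} :
      G.isEnd v → s.col v = .red → G.pred u v → s.col u = .green →
      Step G .endYel s ⟨Function.update s.col v .yellow, s.tok, s.pool⟩
  | endGrn {s : St V} {v : V} :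
      G.isEnd v → s.col v = .yellow →
      Step G .endGrn s ⟨Function.update s.col v .green, s.tok, s.pool⟩

/-- `IsSeq G s l` : the list `l` of (rule, state) pairs is a valid colouring sequence
starting from state `s`. -/
def IsSeq [DecidableEq V] (G : CommGraph V) : St V → List (Rule × St V) → Prop
  | _, [] => True
  | s, p :: l => Step G p.1 s p.2 ∧ IsSeq G p.2 l

/-- The list of states visited by a colouring sequence. -/
def states (s0 : St V) (l : List (Rule × St V)) : List (St V) :=
  s0 :: l.map Prod.snd

/-- The final state of a colouring sequence. -/
def finalSt (s0 : St V) (l : List (Rule × St V)) : St V :=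
  (states s0 l).getLast (by simp [states])

open Classical in
/-- The initial state: start vertices green, all others red, no tokens placed,
token pools given by the token assignment `B` (pool of component `i` holds `B i`). -/
noncomputable def init (G : CommGraph V) (B : ℕ → ℕ) : St V :=
  ⟨fun v => if G.isStart v then Colour.green else Colour.red, fun _ => false, B⟩

/-- A state from which no colouring rule applies. -/
def MaximalFrom [DecidableEq V] (G : CommGraph V) (s : St V) : Prop :=
  ∀ ρ t, ¬ Step G ρ s t

/-- A state is complete when every vertex is green. -/
def Completes (s : St V) : Prop := ∀ v, s.col v = Colour.green

/-- A deadlocking colouring sequence from `s0`: a maximal sequence whose final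
colouring has a non-green vertex. -/
def Deadlocks [DecidableEq V] (G : CommGraph V) (s0 : St V) (l : List (Rule × St V)) : Prop :=
  IsSeq G s0 l ∧ MaximalFrom G (finalSt s0 l) ∧ ¬ Completes (finalSt s0 l)

/-- The system is safe (deadlock free) under token assignment `B`:
every maximal colouring sequence completes. -/
def DeadlockFree [DecidableEq V] (G : CommGraph V) (B : ℕ → ℕ) : Prop :=
  ∀ l, IsSeq G (init G B) l → MaximalFrom G (finalSt (init G B) l) →
    Completes (finalSt (init G B) l)

/-- A state blocks: some yellow send has a matching red receive to which the
buffered-receive rule cannot be applied (no token available). -/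
def Blocked (G : CommGraph V) (s : St V) : Prop :=
  ∃ v r, G.matched v r ∧ s.col v = Colour.yellow ∧ s.col r = Colour.red ∧
    s.pool (G.comp r) = 0

/-- The graph is block free under token assignment `B`: no colouring sequence blocks. -/
def BlockFree [DecidableEq V] (G : CommGraph V) (B : ℕ → ℕ) : Prop :=
  ∀ l, IsSeq G (init G B) l → ¬ Blocked G (finalSt (init G B) l)

/-! The ring `s j → r (j + 1)` can only be entered through a token: the plain receive rule at
`r k` needs `s k` green, and `s k` turns green only after `r (k + 1)` is coloured. A state
invariant of the game says that a coloured vertex holding no token has a green predecessor, and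
that every pool plus the tokens drawn from it stays constant. So while `r k` is red, a coloured
`a k i` holds the only token of its component, and the first head `r k` to be coloured is
coloured by the token rule with all `a k i` still red. Conversely, once some `r k` is coloured,
walking backwards around the ring turns every `s j` green and colours every `r j`, after which
each `r j` can turn green. -/

open Relation Finset

namespace Colour

def rank : Colour → ℕ
  | red => 0 | yellow => 1 | green => 2

lemma eq_green_of_rank_le {c d : Colour} (h : c.rank ≤ d.rank) (hc : c = green) :
    d = green := by
  subst hc; cases d <;> simp_all [rank]

lemma ne_red_of_rank_le {c d : Colour} (h : c.rank ≤ d.rank) (hc : c ≠ red) : d ≠ red := by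
  cases c <;> cases d <;> simp_all [rank]

end Colour

namespace St

def ColLe (x y : St V) : Prop := ∀ v, (x.col v).rank ≤ (y.col v).rank

lemma ColLe.refl (x : St V) : x.ColLe x := fun _ => le_rfl

lemma ColLe.trans {x y z : St V} (h : x.ColLe y) (h' : y.ColLe z) : x.ColLe z :=
  fun v => (h v).trans (h' v)

lemma ColLe.col_eq_green {x y : St V} {v : V} (h : x.ColLe y) (hv : x.col v = .green) :
    y.col v = .green :=
  Colour.eq_green_of_rank_le (h v) hv

lemma ColLe.col_ne_red {x y : St V} {v : V} (h : x.ColLe y) (hv : x.col v ≠ .red) :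
    y.col v ≠ .red :=
  Colour.ne_red_of_rank_le (h v) hv

end St

@[simp] lemma states_cons (x : St V) (p : Rule × St V) (l : List (Rule × St V)) :
    states x (p :: l) = x :: states p.2 l := rfl

@[simp] lemma finalSt_cons (x : St V) (p : Rule × St V) (l : List (Rule × St V)) :
    finalSt x (p :: l) = finalSt p.2 l :=
  List.getLast_cons _

section Game

variable [DecidableEq V] {G : CommGraph V} {ρ : Rule} {x y : St V}

def Move (G : CommGraph V) (x y : St V) : Prop := ∃ ρ, Step G ρ x y

lemma Step.colLe (h : Step G ρ x y) : x.ColLe y := by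
  intro v
  cases h <;> simp only [Function.update_apply] <;> split_ifs <;> simp_all [Colour.rank]

lemma Step.of_col_red {v : V} (h : Step G ρ x y) (hv : x.col v = .red) (hv' : y.col v ≠ .red) :
    y.col v = .yellow ∧ (∀ w ≠ v, y.col w = x.col w) ∧
      ((∃ u, G.pred u v ∧ x.col u = .green) ∨ 0 < x.pool (G.comp v)) := by
  cases h <;> simp only [Function.update_apply] at hv' ⊢ <;> split_ifs at hv' <;> simp_all
  all_goals exact .inl ⟨_, ‹_›, ‹_›⟩

lemma Relation.ReflTransGen.colLe (h : ReflTransGen (Move G) x y) : x.ColLe y := by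
  induction h with
  | refl => exact St.ColLe.refl x
  | tail _ hm ih => exact ih.trans hm.choose_spec.colLe

lemma IsSeq.reflTransGen_of_mem {y : St V} :
    ∀ {x : St V} {l : List (Rule × St V)}, IsSeq G x l → y ∈ states x l →
      ReflTransGen (Move G) y (finalSt x l)
  | x, [], _, hy => by
    obtain rfl : y = x := by simpa [states] using hy
    exact .refl
  | x, p :: l, hl, hy => by
    rw [states_cons, List.mem_cons] at hy
    rw [finalSt_cons]
    rcases hy with rfl | hy
    · exact .head ⟨_, hl.1⟩ (hl.2.reflTransGen_of_mem (List.mem_cons_self ..))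
    · exact hl.2.reflTransGen_of_mem hy

lemma IsSeq.reflTransGen {x : St V} {l : List (Rule × St V)} (hl : IsSeq G x l) :
    ReflTransGen (Move G) x (finalSt x l) :=
  hl.reflTransGen_of_mem (List.mem_cons_self ..)

lemma exists_isSeq_of_reflTransGen (h : ReflTransGen (Move G) x y) :
    ∃ l, IsSeq G x l ∧ finalSt x l = y := by
  induction h using ReflTransGen.head_induction_on with
  | refl => exact ⟨[], trivial, rfl⟩
  | head hm _ ih =>
    obtain ⟨l, hl, rfl⟩ := ih
    exact ⟨(hm.choose, _) :: l, ⟨hm.choose_spec, hl⟩, rfl⟩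

lemma IsSeq.exists_exit_move (Q : St V → Prop) :
    ∀ {x : St V} {l : List (Rule × St V)}, IsSeq G x l → Q x →
      (∃ y ∈ states x l, ¬ Q y) →
      ∃ y z, ReflTransGen (Move G) x y ∧ Q y ∧ Move G y z ∧ ¬ Q z ∧ z ∈ states x l
  | x, [], _, hx, ⟨y, hy, hQy⟩ => by simp_all [states]
  | x, p :: l, hl, hx, ⟨y, hy, hQy⟩ => by
    by_cases hp : Q p.2
    · rw [states_cons, List.mem_cons] at hy
      rcases hy with rfl | hy
      · exact absurd hx hQy
      obtain ⟨y', z, hxy', hy', hm, hz, hmem⟩ :=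
        hl.2.exists_exit_move Q hp ⟨y, hy, hQy⟩
      exact ⟨y', z, .head ⟨_, hl.1⟩ hxy', hy', hm, hz, List.mem_cons_of_mem _ hmem⟩
    · exact ⟨x, p.2, .refl, hx, ⟨_, hl.1⟩, hp,
        List.mem_cons_of_mem _ (List.mem_cons_self ..)⟩

lemma exists_reflTransGen_send_ne_red {u v : V} (hv : G.isSend v) (hp : G.pred u v)
    (hu : x.col u = .green) : ∃ y, ReflTransGen (Move G) x y ∧ y.col v ≠ .red := by
  by_cases hred : x.col v = .red
  · exact ⟨_, .single ⟨_, .sendYel hv hred hp hu⟩, by simp⟩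
  · exact ⟨x, .refl, hred⟩

lemma exists_reflTransGen_recv_green {u v w : V} (hv : G.isRecv v) (hp : G.pred u v)
    (hu : x.col u = .green) (hm : G.matched w v) (hw : x.col w = .green)
    (hvr : x.col v ≠ .red) : ∃ y, ReflTransGen (Move G) x y ∧ y.col v = .green := by
  cases hc : x.col v with
  | red => exact absurd hc hvr
  | yellow => exact ⟨_, .single ⟨_, .recvGrn hv hc hp hu hm hw⟩, by simp⟩
  | green => exact ⟨x, .refl, hc⟩

end Game

lemma CommGraph.WF.ne_of_chain {G : CommGraph V} {r : V} {a : Fin 3 → V} (hwf : G.WF)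
    (hra : G.pred r (a 0)) (h01 : G.pred (a 0) (a 1)) (h12 : G.pred (a 1) (a 2)) (i : Fin 3) :
    a i ≠ r := by
  have := hwf.pred_pos hra
  have := hwf.pred_pos h01
  have := hwf.pred_pos h12
  intro h
  have hpos := congrArg G.pos h
  match i with
  | 0 | 1 | 2 => omega

section Invariant

variable [Fintype V] {G : CommGraph V} {B : ℕ → ℕ} {x y : St V}

def tokCount (G : CommGraph V) (tok : V → Bool) (c : ℕ) : ℕ :=
  #{v | tok v = true ∧ G.comp v = c}

structure GameInv (G : CommGraph V) (B : ℕ → ℕ) (x : St V) : Prop where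
  start_green : ∀ v, G.isStart v → x.col v = .green
  send_green_of_recv_green : ∀ {u v}, G.matched u v → x.col v = .green → x.col u = .green
  recv_ne_red_of_send_green : ∀ {u v}, G.matched u v → x.col u = .green → x.col v ≠ .red
  pred_green : ∀ {u v}, G.pred u v → x.col v ≠ .red → x.tok v = false → x.col u = .green
  tok_recv_yellow : ∀ v, x.tok v = true → G.isRecv v ∧ x.col v = .yellow
  pool_add_tokCount : ∀ c, x.pool c + tokCount G x.tok c = B c

lemma gameInv_init (hwf : G.WF) : GameInv G B (init G B) where
  start_green v hv := by simp [init, hv]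
  send_green_of_recv_green hm := by
    have := (hwf.start_not_recv _ · (hwf.matched_recv hm))
    simp_all [init]
  recv_ne_red_of_send_green hm := by
    have := (hwf.start_not_send _ · (hwf.matched_send hm))
    simp_all [init]
  pred_green hp := by simp [init, hwf.start_no_pred hp]
  tok_recv_yellow v := by simp [init]
  pool_add_tokCount c := by simp [init, tokCount]

lemma GameInv.col_ne_green_of_pred (hx : GameInv G B x) {u v : V} (hp : G.pred u v)
    (hu : x.col u ≠ .green) : x.col v ≠ .green := by
  intro hv
  refine hu (hx.pred_green hp (by simp [hv]) ?_)
  by_contra htok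
  simpa [hv] using (hx.tok_recv_yellow v (by simpa using htok)).2

lemma GameInv.tok_of_pred_ne_green (hx : GameInv G B x) {u v : V} (hp : G.pred u v)
    (hu : x.col u ≠ .green) (hv : x.col v ≠ .red) : x.tok v = true := by
  by_contra htok
  exact hu (hx.pred_green hp hv (by simpa using htok))

lemma GameInv.pool_lt_of_tok (hx : GameInv G B x) {v : V} (hv : x.tok v = true) :
    x.pool (G.comp v) < B (G.comp v) := by
  have hpos : 0 < tokCount G x.tok (G.comp v) := card_pos.mpr ⟨v, by simp [hv]⟩
  have := hx.pool_add_tokCount (G.comp v)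
  omega

/-- A coloured `a i` behind a non-green `r` cannot have been coloured by the plain receive
rule, so it holds a token drawn from `r`'s pool. -/
lemma GameInv.pool_lt_of_chain {r : V} {a : Fin 3 → V} (hwf : G.WF) (hx : GameInv G B x)
    (hra : G.pred r (a 0)) (h01 : G.pred (a 0) (a 1)) (h12 : G.pred (a 1) (a 2))
    (hr : x.col r ≠ .green) {i : Fin 3} (hi : x.col (a i) ≠ .red) :
    x.pool (G.comp r) < B (G.comp r) := by
  have h0 := hx.col_ne_green_of_pred hra hr
  have h1 := hx.col_ne_green_of_pred h01 h0
  obtain ⟨u, hu, hug, hcomp⟩ :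
      ∃ u, G.pred u (a i) ∧ x.col u ≠ .green ∧ G.comp r = G.comp (a i) := by
    match i with
    | 0 => exact ⟨r, hra, hr, hwf.pred_comp hra⟩
    | 1 => exact ⟨_, h01, h0, (hwf.pred_comp hra).trans (hwf.pred_comp h01)⟩
    | 2 => exact ⟨_, h12, h1,
        (hwf.pred_comp hra).trans ((hwf.pred_comp h01).trans (hwf.pred_comp h12))⟩
  rw [hcomp]
  exact hx.pool_lt_of_tok (hx.tok_of_pred_ne_green hu hug hi)

variable [DecidableEq V] {ρ : Rule}

lemma tokCount_eq_update_false_add (tok : V → Bool) (v : V) (c : ℕ) :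
    tokCount G tok c =
      tokCount G (Function.update tok v false) c +
        if tok v = true ∧ G.comp v = c then 1 else 0 := by
  simp only [tokCount, card_filter, ← add_sum_erase _ _ (mem_univ v), Function.update_self,
    Bool.false_eq_true, false_and, if_false, zero_add]
  rw [add_comm]
  congr 1
  exact sum_congr rfl fun u hu => by rw [Function.update_of_ne (ne_of_mem_erase hu)]

lemma GameInv.step (hwf : G.WF) (hx : GameInv G B x) (h : Step G ρ x y) : GameInv G B y := by
  obtain ⟨hS, hM1, hM2, hP, hT, hC⟩ := hx
  refine ⟨fun v hv => h.colLe.col_eq_green (hS v hv), fun hm => ?_, fun hm => ?_, fun hp => ?_,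
    fun v => ?_, fun c => ?_⟩
  · cases h <;> simp only [Function.update_apply] <;> split_ifs <;>
      grind [hwf.send_not_recv, hwf.recv_not_end, hwf.matched_recv, hwf.matched_unique_left]
  · cases h <;> simp only [Function.update_apply] <;> split_ifs <;>
      grind [hwf.send_not_recv, hwf.send_not_end, hwf.matched_send, hwf.matched_unique_right]
  · cases h <;> simp only [Function.update_apply] <;> split_ifs <;> grind [hwf.pred_unique]
  · cases h <;> simp only [Function.update_apply] <;> split_ifs <;>
      grind [hwf.send_not_recv, hwf.recv_not_end]
  · have hc := hC c
    cases h with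
    | @recvYelTok _ v _ _ hred _ _ hpool =>
      have hfree : x.tok v = false := by grind
      have key := tokCount_eq_update_false_add (G := G) (Function.update x.tok v true) v c
      have hrestore : Function.update x.tok v false = x.tok :=
        Function.update_eq_self_iff.mpr hfree.symm
      rw [Function.update_idem, hrestore] at key
      simp only [Function.update_apply] at key ⊢
      split_ifs at key ⊢ <;> grind
    | @recvGrn _ v _ _ _ _ _ _ _ _ =>
      have key := tokCount_eq_update_false_add (G := G) x.tok v c
      split_ifs at key ⊢ <;> grind
    | _ => exact hc

lemma GameInv.of_reflTransGen (hwf : G.WF) (hx : GameInv G B x)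
    (h : ReflTransGen (Move G) x y) : GameInv G B y := by
  induction h with
  | refl => exact hx
  | tail _ hm ih => exact ih.step hwf hm.choose_spec

lemma GameInv.exists_reflTransGen_send_green (hwf : G.WF) (hx : GameInv G B x) {u v w : V}
    (hv : G.isSend v) (hp : G.pred u v) (hu : x.col u = .green) (hm : G.matched v w)
    (hw : x.col w ≠ .red) : ∃ y, ReflTransGen (Move G) x y ∧ y.col v = .green := by
  obtain ⟨y, hxy, hvy⟩ := exists_reflTransGen_send_ne_red hv hp hu
  have hy := hx.of_reflTransGen hwf hxy
  have hwy := hxy.colLe.col_ne_red hw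
  cases hc : y.col v with
  | red => exact absurd hc hvy
  | green => exact ⟨y, hxy, hc⟩
  | yellow =>
    cases hcw : y.col w with
    | red => exact absurd hcw hwy
    | yellow => exact ⟨_, hxy.tail ⟨_, .sendGrn hv hc hm hcw⟩, by simp⟩
    | green => simpa [hc] using hy.send_green_of_recv_green hm hcw

lemma GameInv.exists_reflTransGen_recv_ne_red (hwf : G.WF) (hx : GameInv G B x)
    {u v w w' : V} (hv : G.isRecv v) (hp : G.pred u v) (hu : x.col u = .green)
    (hm : G.matched w v) (hw : G.isSend w) (hpw : G.pred w' w) (hw' : x.col w' = .green) :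
    ∃ y, ReflTransGen (Move G) x y ∧ y.col v ≠ .red := by
  obtain ⟨y, hxy, hwy⟩ := exists_reflTransGen_send_ne_red hw hpw hw'
  have hy := hx.of_reflTransGen hwf hxy
  by_cases hvy : y.col v = .red
  · cases hcw : y.col w with
    | red => exact absurd hcw hwy
    | yellow =>
      have hstep := Step.recvYel hv hvy hm hcw hp (hxy.colLe.col_eq_green hu)
      exact ⟨_, hxy.tail ⟨_, hstep⟩, by simp⟩
    | green => exact absurd hvy (hy.recv_ne_red_of_send_green hm hcw)
  · exact ⟨y, hxy, hvy⟩

end Invariant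

section Widget

variable [DecidableEq V] [Fintype V] {G : CommGraph V} {B : ℕ → ℕ} {x y : St V}
  {t : ℕ} [NeZero t] {st s r : Fin t → V} {a : Fin t → Fin 3 → V}

lemma GameInv.first_ring_move (hwf : G.WF) (hx : GameInv G B x)
    (hchain : ∀ j, G.pred (st j) (s j) ∧ G.pred (s j) (r j) ∧ G.pred (r j) (a j 0) ∧
      G.pred (a j 0) (a j 1) ∧ G.pred (a j 1) (a j 2))
    (hring : ∀ j, G.matched (s j) (r (j + 1))) (hB : ∀ j, B (G.comp (s j)) = 1)
    (hred : ∀ j, x.col (r j) = .red) (hm : Move G x y) {k : Fin t}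
    (hk : y.col (r k) ≠ .red) : y.col (r k) = .yellow ∧ ∀ i, y.col (a k i) = .red := by
  obtain ⟨-, hsr, hra, h01, h12⟩ := hchain k
  obtain ⟨ρ, h⟩ := hm
  obtain ⟨hyel, hsame, ⟨u, hu, hug⟩ | hpool⟩ := h.of_col_red (hred k) hk
  · obtain rfl : u = s k := hwf.pred_unique hu hsr
    exact absurd (hred (k + 1)) (hx.recv_ne_red_of_send_green (hring k) hug)
  · refine ⟨hyel, fun i => ?_⟩
    rw [hsame _ (hwf.ne_of_chain hra h01 h12 i)]
    by_contra hi
    have hlt := hx.pool_lt_of_chain hwf hra h01 h12 (by simp [hred k]) hi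
    rw [← hwf.pred_comp hsr] at hlt hpool
    rw [hB k] at hlt
    omega

lemma GameInv.exists_reflTransGen_ring_step (hwf : G.WF) (hx : GameInv G B x)
    (hstart : ∀ j, G.isStart (st j))
    (hchain : ∀ j, G.pred (st j) (s j) ∧ G.pred (s j) (r j))
    (hsend : ∀ j, G.isSend (s j)) (hrecv : ∀ j, G.isRecv (r j))
    (hring : ∀ j, G.matched (s j) (r (j + 1))) (j : Fin t) (hr : x.col (r (j + 1)) ≠ .red) :
    ∃ y, ReflTransGen (Move G) x y ∧ y.col (s j) = .green ∧ y.col (r j) ≠ .red := by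
  obtain ⟨y, hxy, hsy⟩ := hx.exists_reflTransGen_send_green hwf (hsend j) (hchain j).1
    (hx.start_green _ (hstart j)) (hring j) hr
  have hy := hx.of_reflTransGen hwf hxy
  have hprev : G.matched (s (j - 1)) (r j) := by simpa using hring (j - 1)
  obtain ⟨z, hyz, hrz⟩ := hy.exists_reflTransGen_recv_ne_red hwf (hrecv j) (hchain j).2 hsy
    hprev (hsend _) (hchain _).1 (hy.start_green _ (hstart _))
  exact ⟨z, hxy.trans hyz, hyz.colLe.col_eq_green hsy, hrz⟩

open Fin.NatCast in
lemma GameInv.exists_reflTransGen_sends_green (hwf : G.WF) (hx : GameInv G B x)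
    (hstart : ∀ j, G.isStart (st j))
    (hchain : ∀ j, G.pred (st j) (s j) ∧ G.pred (s j) (r j))
    (hsend : ∀ j, G.isSend (s j)) (hrecv : ∀ j, G.isRecv (r j))
    (hring : ∀ j, G.matched (s j) (r (j + 1))) {k : Fin t} (hk : x.col (r k) ≠ .red) :
    ∃ y, ReflTransGen (Move G) x y ∧ ∀ j, y.col (s j) = .green := by
  have walk : ∀ n : ℕ, ∃ y, ReflTransGen (Move G) x y ∧
      y.col (r (k - (n : Fin t))) ≠ .red ∧
      ∀ i < n, y.col (s (k - ((i + 1 : ℕ) : Fin t))) = .green := by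
    intro n
    induction n with
    | zero => exact ⟨x, .refl, by simpa using hk, by simp⟩
    | succ n ih =>
      obtain ⟨y, hxy, hry, hsy⟩ := ih
      have hnext : k - ((n + 1 : ℕ) : Fin t) + 1 = k - (n : Fin t) := by push_cast; abel
      obtain ⟨z, hyz, hsz, hrz⟩ := (hx.of_reflTransGen hwf hxy).exists_reflTransGen_ring_step
        hwf hstart hchain hsend hrecv hring _ (by rwa [hnext])
      refine ⟨z, hxy.trans hyz, hrz, fun i hi => ?_⟩
      rcases Nat.lt_succ_iff_lt_or_eq.mp hi with hi | rfl
      · exact hyz.colLe.col_eq_green (hsy i hi)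
      · exact hsz
  obtain ⟨y, hxy, -, hsy⟩ := walk t
  refine ⟨y, hxy, fun j => ?_⟩
  simpa [Fin.cast_val_eq_self] using hsy (k - j - 1 : Fin t).val (Fin.is_lt _)

end Widget

theorem disjunction_widget_general {V : Type} [DecidableEq V] [Fintype V]
    (t : ℕ) [NeZero t]
    (G : CommGraph V) (hwf : G.WF) (B : ℕ → ℕ)
    (st : Fin t → V) (s r : Fin t → V) (a : Fin t → Fin 3 → V)
    (hstart : ∀ j, G.isStart (st j))
    (hchain : ∀ j, G.pred (st j) (s j) ∧ G.pred (s j) (r j) ∧ G.pred (r j) (a j 0) ∧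
      G.pred (a j 0) (a j 1) ∧ G.pred (a j 1) (a j 2))
    (hsend : ∀ j, G.isSend (s j))
    (hrecv : ∀ j, G.isRecv (r j) ∧ ∀ i, G.isRecv (a j i))
    (hring : ∀ j, G.matched (s j) (r (j + 1)))
    (hB : ∀ j, B (G.comp (s j)) = 1) :
    ∀ l, IsSeq G (init G B) l →
      (((∃ j, ∃ st' ∈ states (init G B) l, st'.col (r j) = Colour.green) →
        ∃ k, ∃ st' ∈ states (init G B) l, st'.col (r k) = Colour.yellow ∧
          ∀ i, st'.col (a k i) = Colour.red) ∧
       ((∃ k, ∃ st' ∈ states (init G B) l, st'.col (r k) = Colour.yellow ∧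
          ∀ i, st'.col (a k i) = Colour.red) →
        ∀ j, ∃ l', IsSeq G (finalSt (init G B) l) l' ∧
          (finalSt (finalSt (init G B) l) l').col (r j) = Colour.green)) := by
  intro l hl
  have hinit : GameInv G B (init G B) := gameInv_init hwf
  have hrecv' j := (hrecv j).1
  refine ⟨fun ⟨j, y, hy, hgreen⟩ => ?_, fun ⟨k, y, hy, hyel, _⟩ j => ?_⟩
  · have hred j : (init G B).col (r j) = .red := by
      have hns : ¬ G.isStart (r j) := fun h => hwf.start_not_recv _ h (hrecv' j)
      simp [init, hns]
    obtain ⟨x, z, hx, hxred, hm, hz, hzmem⟩ := hl.exists_exit_move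
      (fun x => ∀ j, x.col (r j) = .red) hred ⟨y, hy, fun h => by simp [h j] at hgreen⟩
    obtain ⟨k, hk⟩ := not_forall.mp hz
    exact ⟨k, z, hzmem,
      (hinit.of_reflTransGen hwf hx).first_ring_move hwf hchain hring hB hxred hm hk⟩
  · have hfinal := hinit.of_reflTransGen hwf hl.reflTransGen
    have hk : y.col (r k) ≠ .red := by simp [hyel]
    obtain ⟨x, hx, hsx⟩ := hfinal.exists_reflTransGen_sends_green hwf hstart
      (fun j => ⟨(hchain j).1, (hchain j).2.1⟩) hsend hrecv' hring
      ((hl.reflTransGen_of_mem hy).colLe.col_ne_red hk)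
    have hprev : G.matched (s (j - 1)) (r j) := by simpa using hring (j - 1)
    obtain ⟨z, hxz, hz⟩ := exists_reflTransGen_recv_green (hrecv' j) (hchain j).2.1 (hsx j)
      hprev (hsx _) ((hfinal.of_reflTransGen hwf hx).recv_ne_red_of_send_green hprev (hsx _))
    obtain ⟨l', hl', rfl⟩ := exists_isSeq_of_reflTransGen (hx.trans hxz)
    exact ⟨l', hl', hz⟩

/-- **Disjunction-widget property of the BSP_r construction.** The widget has `t`
term components `P_j : start → s_j → r_j → a_{j,0} → a_{j,1} → a_{j,2}`, where the
`s_j, r_j` form a `t`-ring (`s_j` matched to `r_{j+1}`), the receives `a_{j,i}`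
are matched with sends outside the widget, and each term component holds exactly
one token. In any colouring sequence, some `r_j` becomes green only if some `r_k`
is yellow while `a_{k,0}, a_{k,1}, a_{k,2}` are still red; and conversely, if that
happens, the sequence can be extended to colour every `r_j` green. -/
theorem disjunction_widget {V : Type} [DecidableEq V] [Fintype V]
    (t : ℕ) [NeZero t] (ht : 1 < t)
    (G : CommGraph V) (hwf : G.WF) (B : ℕ → ℕ)
    (st : Fin t → V) (s r : Fin t → V) (a : Fin t → Fin 3 → V)
    (hstart : ∀ j, G.isStart (st j))
    (hchain : ∀ j, G.pred (st j) (s j) ∧ G.pred (s j) (r j) ∧ G.pred (r j) (a j 0) ∧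
      G.pred (a j 0) (a j 1) ∧ G.pred (a j 1) (a j 2))
    (hsend : ∀ j, G.isSend (s j))
    (hrecv : ∀ j, G.isRecv (r j) ∧ ∀ i, G.isRecv (a j i))
    (hring : ∀ j, G.matched (s j) (r (j + 1)))
    (hextern : ∀ j i w, G.matched w (a j i) →
      G.comp w ∉ Set.range fun j' => G.comp (s j'))
    (honly : ∀ j, ∀ v, G.isRecv v → G.comp v = G.comp (s j) →
      v = r j ∨ v = a j 0 ∨ v = a j 1 ∨ v = a j 2)
    (hdisj : Function.Injective fun j => G.comp (s j))
    (hB : ∀ j, B (G.comp (s j)) = 1) :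
    ∀ l, IsSeq G (init G B) l →
      (((∃ j, ∃ st' ∈ states (init G B) l, st'.col (r j) = Colour.green) →
        ∃ k, ∃ st' ∈ states (init G B) l, st'.col (r k) = Colour.yellow ∧
          ∀ i, st'.col (a k i) = Colour.red) ∧
       ((∃ k, ∃ st' ∈ states (init G B) l, st'.col (r k) = Colour.yellow ∧
          ∀ i, st'.col (a k i) = Colour.red) →
        ∀ j, ∃ l', IsSeq G (finalSt (init G B) l) l' ∧
          (finalSt (finalSt (init G B) l) l').col (r j) = Colour.green)) :=
  disjunction_widget_general t G hwf B st s r a hstart hchain hsend hrecv hring hB
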